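/- arXiv:2604.10802 — 6 statements merged into one kernel-verified Lean document; each statement's English description precedes it below -/
import Mathlib

section
/- Let p be an odd prime (or p = 2 with k ≥ 2), 1 ≤ k ≤ ν, and let the cyclic group Ω_p^{k,ν} = ker((ℤ/p^νℤ)ˣ → (ℤ/p^kℤ)ˣ) act on ℤ/p^νℤ by multiplication. Then the first group cohomology H¹(Ω_p^{k,ν}, ℤ/p^νℤ) vanishes. -/
/-!
Write `ν = m + k`. The hypothesis on `p` and `k` is equivalent to `k + 2 ≤ p * k`, which gives
`(1 + p^k)^(p^m) = 1 + p^(m+k) * (1 + p * y)` for some integer `y`. Hence `1 + p^k` has order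
`p^m = |Ω|`, so it generates `Ω`, and the norm of `Ω` is multiplication by
`∑_{i < p^m} (1 + p^k)^i = p^m * (1 + p * y)`, i.e. by `p^m` times a unit. Its kernel is therefore
`p^k ℤ/p^νℤ`, the image of `τ - 1 = p^k`, and `H¹ = ker N / im (τ - 1)` vanishes.
-/

open groupCohomology

/-- The representation of a subgroup `H` of `(ZMod n)ˣ` on `ZMod n` by multiplication. -/
noncomputable def mulRep (n : ℕ) (H : Subgroup (ZMod n)ˣ) : Representation ℤ H (ZMod n) :=
  ((Algebra.lmul ℤ (ZMod n)).toRingHom.toMonoidHom).comp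
    ((Units.coeHom (ZMod n)).comp H.subtype)

universe u

open CategoryTheory in
theorem groupCohomology.subsingleton_H1_of_ker_norm_le_range {k G : Type u} [CommRing k]
    [CommGroup G] [Fintype G] (A : Rep k G) (g : G) (hg : ∀ x, x ∈ Subgroup.zpowers g)
    (h : LinearMap.ker A.ρ.norm ≤ LinearMap.range (A.ρ g - 1)) :
    Subsingleton (H1 A) := by
  have hexact : (Rep.FiniteCyclicGroup.subCompNormHom A g).Exact := by
    rw [ShortComplex.moduleCat_exact_iff]
    intro a ha
    obtain ⟨b, hb⟩ := h ha
    exact ⟨b, by simpa [Rep.sub_hom, Rep.applyAsHom] using hb⟩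
  exact ModuleCat.subsingleton_of_isZero <| (ShortComplex.exact_iff_isZero_homology _).1 hexact
    |>.of_iso (Rep.FiniteCyclicGroup.groupCohomologyIsoOdd A g hg 1 odd_one)

theorem Finset.sum_univ_eq_sum_range_orderOf {G M : Type*} [Group G] [Fintype G]
    [AddCommMonoid M] {g : G} (hg : ∀ x, x ∈ Subgroup.zpowers g) (f : G → M) :
    ∑ x, f x = ∑ i ∈ range (orderOf g), f (g ^ i) := by
  classical
  rw [← IsCyclic.image_range_orderOf hg, sum_image]
  intro i hi j hj hij
  exact pow_injOn_Iio_orderOf (by simpa using hi) (by simpa using hj) hij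

theorem mulRep_norm_apply (n : ℕ) (H : Subgroup (ZMod n)ˣ) [Fintype H] (a : ZMod n) :
    (mulRep n H).norm a = (∑ σ : H, ((σ : (ZMod n)ˣ) : ZMod n)) * a := by
  simp [Representation.norm, mulRep, Finset.sum_mul]

theorem ZMod.exists_eq_mul_of_mul_eq_zero {c d n : ℕ} [NeZero n] (hn : c * d = n) {a : ZMod n}
    (h : (c : ZMod n) * a = 0) : ∃ b, a = d * b := by
  have hc : c ≠ 0 := by rintro rfl; exact NeZero.ne n (by simp [← hn])
  rw [← ZMod.natCast_zmod_val a, ← Nat.cast_mul, ZMod.natCast_eq_zero_iff] at h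
  obtain ⟨b, hb⟩ :=
    Nat.dvd_of_mul_dvd_mul_left (Nat.pos_of_ne_zero hc) (hn.symm ▸ h : c * d ∣ c * a.val)
  exact ⟨b, by rw [← ZMod.natCast_zmod_val a, hb, Nat.cast_mul]⟩

theorem ZMod.isNilpotent_natCast_self_pow (p n : ℕ) : IsNilpotent (p : ZMod (p ^ n)) :=
  ⟨n, by exact_mod_cast ZMod.natCast_self _⟩

section PrimePow

variable {p k : ℕ}

theorem Int.exists_one_add_prime_pow_pow_prime_pow (hp : p.Prime) (hk : k ≠ 0)
    (hpk : k + 2 ≤ p * k) (m : ℕ) :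
    ∃ y : ℤ, (1 + (p : ℤ) ^ k) ^ p ^ m = 1 + p ^ (m + k) * (1 + p * y) := by
  obtain ⟨y, hy⟩ := ZMod.exists_one_add_mul_pow_prime_pow_eq (u := (p : ℤ) ^ k) (v := p) hp
    (dvd_pow_self _ hk) (by
      rw [← pow_succ', ← pow_succ, ← pow_mul, mul_comm k]
      exact pow_dvd_pow _ hpk) 1 m
  exact ⟨y, by rw [← mul_one ((p : ℤ) ^ k), hy, pow_add]⟩

theorem Int.exists_geom_sum_one_add_prime_pow (hp : p.Prime) (hk : k ≠ 0)
    (hpk : k + 2 ≤ p * k) (m : ℕ) :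
    ∃ y : ℤ, ∑ i ∈ Finset.range (p ^ m), (1 + (p : ℤ) ^ k) ^ i = p ^ m * (1 + p * y) := by
  obtain ⟨y, hy⟩ := Int.exists_one_add_prime_pow_pow_prime_pow hp hk hpk m
  have hp0 : (p : ℤ) ≠ 0 := by exact_mod_cast hp.ne_zero
  refine ⟨y, mul_right_cancel₀ (pow_ne_zero k hp0) ?_⟩
  have hgeom := geom_sum_mul (1 + (p : ℤ) ^ k) (p ^ m)
  rw [add_sub_cancel_left, hy, pow_add] at hgeom
  linear_combination hgeom

theorem ZMod.exists_eq_prime_pow_mul_of_geom_sum_mul_eq_zero (hp : p.Prime) (hk : k ≠ 0)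
    (hpk : k + 2 ≤ p * k) {m : ℕ} {a : ZMod (p ^ (m + k))}
    (h : (∑ i ∈ Finset.range (p ^ m), (1 + (p : ZMod (p ^ (m + k))) ^ k) ^ i) * a = 0) :
    ∃ b, a = p ^ k * b := by
  have : NeZero (p ^ (m + k)) := ⟨pow_ne_zero _ hp.ne_zero⟩
  obtain ⟨y, hy⟩ := Int.exists_geom_sum_one_add_prime_pow hp hk hpk m
  have hsum : ∑ i ∈ Finset.range (p ^ m), (1 + (p : ZMod (p ^ (m + k))) ^ k) ^ i =
      p ^ m * (1 + p * y) := by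
    exact_mod_cast congrArg ((↑) : ℤ → ZMod (p ^ (m + k))) hy
  have hunit : IsUnit (1 + p * y : ZMod (p ^ (m + k))) :=
    ((Commute.all _ _).isNilpotent_mul_right (isNilpotent_natCast_self_pow p _)).isUnit_one_add
  rw [hsum, mul_right_comm, hunit.mul_left_eq_zero] at h
  simpa using exists_eq_mul_of_mul_eq_zero (c := p ^ m) (d := p ^ k) (pow_add p m k).symm
    (by simpa using h)

theorem ZMod.card_ker_unitsMap_mul_totient {m n : ℕ} [NeZero m] (h : n ∣ m) :
    Nat.card (unitsMap h).ker * n.totient = m.totient := by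
  have : NeZero n := ⟨fun hn => NeZero.ne m (Nat.eq_zero_of_zero_dvd (hn ▸ h))⟩
  rw [← ZMod.card_units_eq_totient, ← ZMod.card_units_eq_totient, ← Nat.card_eq_fintype_card,
    ← Nat.card_eq_fintype_card, Subgroup.card_eq_card_quotient_mul_card_subgroup (unitsMap h).ker,
    mul_comm, Nat.card_congr (QuotientGroup.quotientKerEquivOfSurjective _
      (unitsMap_surjective h)).toEquiv]

theorem ZMod.card_ker_unitsMap_prime_pow (hp : p.Prime) (hk : k ≠ 0) (m : ℕ)
    (h : p ^ k ∣ p ^ (m + k)) : Nat.card (unitsMap h).ker = p ^ m := by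
  have : NeZero (p ^ (m + k)) := ⟨pow_ne_zero _ hp.ne_zero⟩
  have htot : (p ^ (m + k)).totient = p ^ m * (p ^ k).totient := by
    obtain ⟨j, rfl⟩ := Nat.exists_eq_add_one_of_ne_zero hk
    rw [← add_assoc, Nat.totient_prime_pow_succ hp, Nat.totient_prime_pow_succ hp, pow_add,
      mul_assoc]
  refine Nat.eq_of_mul_eq_mul_right (Nat.totient_pos.2 (pow_pos hp.pos k)) ?_
  rw [ZMod.card_ker_unitsMap_mul_totient h, htot]

theorem ZMod.exists_generator_ker_unitsMap_prime_pow (hp : p.Prime) (hk : k ≠ 0)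
    (hpk : k + 2 ≤ p * k) (m : ℕ) (h : p ^ k ∣ p ^ (m + k)) :
    ∃ v : (unitsMap h).ker, ((v : (ZMod (p ^ (m + k)))ˣ) : ZMod (p ^ (m + k))) = 1 + p ^ k ∧
      orderOf v = p ^ m ∧ ∀ σ, σ ∈ Subgroup.zpowers v := by
  have : NeZero (p ^ (m + k)) := ⟨pow_ne_zero _ hp.ne_zero⟩
  have hnil : IsNilpotent ((p : ZMod (p ^ (m + k))) ^ k) :=
    (isNilpotent_natCast_self_pow p (m + k)).pow_of_pos hk
  set u := hnil.isUnit_one_add.unit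
  have hu : u ∈ (unitsMap h).ker := by
    rw [MonoidHom.mem_ker, Units.ext_iff, unitsMap_def, Units.coe_map, MonoidHom.coe_coe,
      IsUnit.unit_spec, map_add, map_one, map_pow, map_natCast, ← Nat.cast_pow,
      ZMod.natCast_self, add_zero, Units.val_one]
  have hord : orderOf (⟨u, hu⟩ : (unitsMap h).ker) = p ^ m := by
    rw [Subgroup.orderOf_mk, ← orderOf_units, IsUnit.unit_spec]
    simpa using orderOf_one_add_mul_prime_pow hp k hk hpk 1
      (by simpa using (Nat.prime_iff_prime_int.1 hp).not_dvd_one) m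
  have htop : Subgroup.zpowers (⟨u, hu⟩ : (unitsMap h).ker) = ⊤ :=
    Subgroup.eq_top_of_card_eq _ <| by
      rw [Nat.card_zpowers, hord, card_ker_unitsMap_prime_pow hp hk]
  exact ⟨⟨u, hu⟩, rfl, hord, fun σ => htop ▸ Subgroup.mem_top σ⟩

end PrimePow

/-- Let `p` be an odd prime (or `p = 2` with `k ≥ 2`), `1 ≤ k ≤ ν`, and let the cyclic group
`Ω_p^{k,ν} = ker((ℤ/p^νℤ)ˣ → (ℤ/p^kℤ)ˣ)` act on `ℤ/p^νℤ` by multiplication. Then the first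
group cohomology `H¹(Ω_p^{k,ν}, ℤ/p^νℤ)` vanishes. -/
theorem stmt_2 (p : ℕ) (hp : p.Prime) (k ν : ℕ) (hk : 1 ≤ k) (hkν : k ≤ ν)
    (h2 : Odd p ∨ (p = 2 ∧ 2 ≤ k)) :
    Subsingleton (groupCohomology.H1
      (Rep.of (mulRep (p ^ ν) (ZMod.unitsMap (pow_dvd_pow p hkν)).ker))) := by
  obtain ⟨m, rfl⟩ := Nat.exists_eq_add_of_le' hkν
  have hpk : k + 2 ≤ p * k := by
    rcases h2 with ⟨r, rfl⟩ | ⟨rfl, h2k⟩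
    · have : 1 ≤ r := by have := hp.two_le; omega
      nlinarith
    · omega
  have : NeZero (p ^ (m + k)) := ⟨pow_ne_zero _ hp.ne_zero⟩
  have := Fintype.ofFinite (ZMod.unitsMap (pow_dvd_pow p hkν)).ker
  obtain ⟨v, hv, hord, hgen⟩ :=
    ZMod.exists_generator_ker_unitsMap_prime_pow hp (by omega) hpk m (pow_dvd_pow p hkν)
  refine subsingleton_H1_of_ker_norm_le_range _ v hgen fun a ha => ?_
  rw [LinearMap.mem_ker, Rep.of_ρ, mulRep_norm_apply, Finset.sum_univ_eq_sum_range_orderOf hgen,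
    hord] at ha
  simp only [Subgroup.coe_pow, Units.val_pow_eq_pow_val, hv] at ha
  obtain ⟨b, rfl⟩ := ZMod.exists_eq_prime_pow_mul_of_geom_sum_mul_eq_zero hp (by omega) hpk ha
  refine ⟨b, ?_⟩
  show ((v : (ZMod (p ^ (m + k)))ˣ) : ZMod (p ^ (m + k))) * b - b = _
  rw [hv]
  ring
end

section
/- Let p be an odd prime, 1 ≤ k ≤ ν, and let τ = 1 + p^k in ℤ/p^νℤ. Then the norm sum Σ_{i=0}^{p^(ν−k)−1} τ^i equals u·p^(ν−k) in ℤ/p^νℤ for some unit u; consequently, multiplication by this sum on ℤ/p^νℤ has kernel equal to p^k·(ℤ/p^νℤ) and image equal to p^(ν−k)·(ℤ/p^νℤ). -/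
/-- Let `p` be an odd prime, `1 ≤ k ≤ ν`, and let `τ = 1 + p^k` in `ℤ/p^νℤ`. Then the norm sum
`Σ_{i=0}^{p^(ν−k)−1} τ^i` equals `u·p^(ν−k)` in `ℤ/p^νℤ` for some unit `u`; consequently,
multiplication by this sum on `ℤ/p^νℤ` has kernel equal to `p^k·(ℤ/p^νℤ)` and image equal to
`p^(ν−k)·(ℤ/p^νℤ)`. -/
theorem stmt_4 (p : ℕ) (hp : p.Prime) (hodd : Odd p) (k ν : ℕ) (hk : 1 ≤ k) (hkν : k ≤ ν)
    (S : ZMod (p ^ ν))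
    (hS : S = ∑ i ∈ Finset.range (p ^ (ν - k)), (1 + (p : ZMod (p ^ ν)) ^ k) ^ i) :
    (∃ u : (ZMod (p ^ ν))ˣ, S = (u : ZMod (p ^ ν)) * (p : ZMod (p ^ ν)) ^ (ν - k)) ∧
    {x : ZMod (p ^ ν) | S * x = 0} = Set.range (fun y : ZMod (p ^ ν) => (p : ZMod (p ^ ν)) ^ k * y) ∧
    Set.range (fun x : ZMod (p ^ ν) => S * x)
      = Set.range (fun y : ZMod (p ^ ν) => (p : ZMod (p ^ ν)) ^ (ν - k) * y) := by
  haveI : Fact p.Prime := ⟨hp⟩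
  have hp0 : p ≠ 0 := hp.pos.ne'
  haveI : NeZero (p ^ ν) := ⟨pow_ne_zero _ hp0⟩
  set N := p ^ (ν - k) with hN
  set x := 1 + p ^ k with hxdef
  set T : ℕ := ∑ i ∈ Finset.range N, x ^ i with hTdef
  have hN0 : N ≠ 0 := pow_ne_zero _ hp0
  have hpk1 : 1 ≤ p ^ k := Nat.one_le_pow _ _ hp.pos
  -- basic facts
  have hx1 : 1 < x := by rw [hxdef]; omega
  have hxsub : x - 1 = p ^ k := by rw [hxdef]; omega
  have hpx : ¬ p ∣ x := by
    intro h
    have hpk : p ∣ p ^ k := dvd_pow_self p (by omega)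
    have h' : p ∣ p ^ k + 1 := by rwa [hxdef, Nat.add_comm] at h
    have h1 : p ∣ 1 := (Nat.dvd_add_right hpk).mp h'
    have := Nat.le_of_dvd one_pos h1
    have := hp.one_lt
    omega
  have hxy : p ∣ x - 1 := by
    rw [hxsub]; exact dvd_pow_self p (by omega)
  -- geometric sum identity in ℕ
  have hge : 1 ≤ x ^ N := Nat.one_le_pow _ _ (by omega)
  have key : p ^ k * T = x ^ N - 1 := by
    have hZ : (∑ i ∈ Finset.range N, (x : ℤ) ^ i) * ((x : ℤ) - 1) = (x : ℤ) ^ N - 1 :=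
      geom_sum_mul _ _
    have hTZ : ((T : ℕ) : ℤ) = ∑ i ∈ Finset.range N, (x : ℤ) ^ i := by
      rw [hTdef]; push_cast; rfl
    have hxZ : ((x : ℤ) - 1) = (p : ℤ) ^ k := by
      rw [hxdef]; push_cast; ring
    have h2 : ((p ^ k * T : ℕ) : ℤ) = ((x ^ N - 1 : ℕ) : ℤ) := by
      rw [Nat.cast_sub hge]
      push_cast
      rw [hTZ, ← hxZ, ← hZ]
      ring
    exact_mod_cast h2
  have hT0 : T ≠ 0 := by
    intro h
    have hlt : 1 < x ^ N := by
      calc 1 < x := hx1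
      _ ≤ x ^ N := Nat.le_self_pow hN0 x
    rw [h, Nat.mul_zero] at key
    omega
  -- lifting the exponent
  have hval : padicValNat p (x ^ N - 1 ^ N) = padicValNat p (x - 1) + padicValNat p N :=
    padicValNat.pow_sub_pow hodd hx1 hxy hpx hN0
  have hval2 : padicValNat p T = ν - k := by
    have h1 : padicValNat p (x - 1) = k := by rw [hxsub, padicValNat.prime_pow]
    have h2 : padicValNat p N = ν - k := by rw [hN, padicValNat.prime_pow]
    have h3 : padicValNat p (p ^ k * T) = k + padicValNat p T := by
      rw [padicValNat.mul (pow_ne_zero _ hp0) hT0, padicValNat.prime_pow]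
    rw [one_pow, ← key] at hval
    rw [h1, h2, h3] at hval
    omega
  -- extract the unit part
  obtain ⟨m, hm⟩ : p ^ (ν - k) ∣ T := hval2 ▸ pow_padicValNat_dvd
  have hpm : ¬ p ∣ m := by
    intro h
    obtain ⟨c, rfl⟩ := h
    have : p ^ (ν - k + 1) ∣ T := ⟨c, by rw [hm]; ring⟩
    exact pow_succ_padicValNat_not_dvd hT0 (hval2 ▸ this)
  have hmu : IsUnit ((m : ZMod (p ^ ν))) := by
    rw [ZMod.isUnit_iff_coprime]
    exact Nat.Coprime.pow_right _ ((Nat.Prime.coprime_iff_not_dvd hp).mpr hpm).symm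
  -- S as cast of T
  have hST : S = ((T : ℕ) : ZMod (p ^ ν)) := by
    rw [hTdef]
    push_cast [hxdef]
    rw [hS]
  have hSm : S = (m : ZMod (p ^ ν)) * (p : ZMod (p ^ ν)) ^ (ν - k) := by
    rw [hST, hm]
    push_cast
    ring
  obtain ⟨u, hu⟩ := hmu
  have hp0' : (p : ZMod (p ^ ν)) ^ ν = 0 := by
    rw [← Nat.cast_pow, ZMod.natCast_self]
  -- kernel lemma: p^(ν-k) * z = 0 ↔ z ∈ range (p^k * ·)
  have kerlem : ∀ z : ZMod (p ^ ν), (p : ZMod (p ^ ν)) ^ (ν - k) * z = 0 ↔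
      ∃ y, (p : ZMod (p ^ ν)) ^ k * y = z := by
    intro z
    constructor
    · intro h
      have hz : ((z.val : ℕ) : ZMod (p ^ ν)) = z := by
        simp [ZMod.natCast_val, ZMod.cast_id]
      rw [← hz, ← Nat.cast_pow, ← Nat.cast_mul, ZMod.natCast_eq_zero_iff] at h
      have hdvd : p ^ (ν - k) * p ^ k ∣ p ^ (ν - k) * z.val := by
        rwa [← pow_add, Nat.sub_add_cancel hkν]
      have : p ^ k ∣ z.val := (mul_dvd_mul_iff_left (pow_ne_zero (ν - k) hp0)).mp hdvd
      obtain ⟨c, hc⟩ := this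
      exact ⟨(c : ZMod (p ^ ν)), by rw [← hz, hc]; push_cast; ring⟩
    · rintro ⟨y, rfl⟩
      rw [← mul_assoc, ← pow_add, Nat.sub_add_cancel hkν, hp0', zero_mul]
  refine ⟨⟨u, by rw [hSm, hu]⟩, ?_, ?_⟩
  · ext z
    simp only [Set.mem_setOf_eq, Set.mem_range]
    rw [hSm, hu.symm]
    constructor
    · intro h
      have h' : (p : ZMod (p ^ ν)) ^ (ν - k) * z = 0 := by
        have := congrArg (fun w => (↑u⁻¹ : ZMod (p ^ ν)) * w) h
        simpa [mul_assoc, ← mul_assoc (↑u⁻¹ : ZMod (p ^ ν)), Units.inv_mul] using this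
      exact (kerlem z).mp h'
    · rintro ⟨y, rfl⟩
      have : (p : ZMod (p ^ ν)) ^ (ν - k) * ((p : ZMod (p ^ ν)) ^ k * y) = 0 :=
        (kerlem _).mpr ⟨y, rfl⟩
      rw [mul_assoc, this, mul_zero]
  · ext z
    simp only [Set.mem_range]
    rw [hSm, hu.symm]
    constructor
    · rintro ⟨w, rfl⟩
      exact ⟨(↑u : ZMod (p ^ ν)) * w, by ring⟩
    · rintro ⟨w, rfl⟩
      refine ⟨(↑u⁻¹ : ZMod (p ^ ν)) * w, ?_⟩
      calc (↑u : ZMod (p ^ ν)) * (p : ZMod (p ^ ν)) ^ (ν - k) * ((↑u⁻¹ : ZMod (p ^ ν)) * w)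
          = ((↑u : ZMod (p ^ ν)) * ↑u⁻¹) * ((p : ZMod (p ^ ν)) ^ (ν - k) * w) := by ring
        _ = (p : ZMod (p ^ ν)) ^ (ν - k) * w := by rw [Units.mul_inv, one_mul]
end

section
/- Let K be a field of characteristic 0 whose maximal abelian subextension over ℚ is finite, and let λ be the number of roots of unity in K. For every positive integer n, the group cohomology H¹(Gal(K(ζₙ)/K), μₙ) is killed by λ (i.e., every element has order dividing λ). -/
/-!
Let `e` be the order of a class `x ∈ H¹`, represented by a cocycle `f`. Since `n` kills
`μₙ`, `e ∣ n`. The Galois group of the cyclotomic extension `K(ζₙ)/K` is abelian and each `σ`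
acts on `μₙ` as `t ↦ t ^ c`; for central `σ` the cocycle relation makes `(c - 1) • f` a
coboundary, so `e ∣ c - 1`. Hence every `σ` fixes the
primitive `e`-th roots of unity, which therefore lie in `K`, and `e ∣ λ`.
-/

set_option synthInstance.maxHeartbeats 1000000
noncomputable section

/-- The homomorphism from the Galois group `L ≃ₐ[K] L` to the automorphisms of the group of
`n`-th roots of unity of `L`. -/
def galToMulAutRoots (K L : Type*) [Field K] [Field L] [Algebra K L] (n : ℕ) :
    (L ≃ₐ[K] L) →* MulAut (rootsOfUnity n L) where
  toFun σ := MulEquiv.restrictRootsOfUnity (σ : L ≃* L) n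
  map_one' := by
    ext ζ
    rfl
  map_mul' σ τ := by
    ext ζ
    rfl

/-- The natural action of the Galois group `L ≃ₐ[K] L` on the group of `n`-th roots of
unity of `L`. -/
instance galRootsAction (K L : Type*) [Field K] [Field L] [Algebra K L] (n : ℕ) :
    MulDistribMulAction (L ≃ₐ[K] L) (rootsOfUnity n L) :=
  MulDistribMulAction.compHom _ (galToMulAutRoots K L n)

/-- The maximal abelian subextension of `K/ℚ`. -/
def maxAb (K : Type*) [Field K] [CharZero K] : IntermediateField ℚ K :=
  ⨆ F ∈ {F : IntermediateField ℚ K |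
      IsGalois ℚ ↥F ∧ ∀ σ τ : ↥F ≃ₐ[ℚ] ↥F, σ * τ = τ * σ}, F

/-- The number of roots of unity contained in a field `F`. -/
def numRootsOfUnity (F : Type*) [Field F] : ℕ :=
  Nat.card (CommGroup.torsion Fˣ)

universe u

namespace groupCohomology

section Rep

variable {k G : Type u} [CommRing k] [Group G] {A : Rep k G}

theorem smul_H1_eq_zero_of_forall_smul_eq_zero {c : k} (hc : ∀ a : A, c • a = 0) (x : H1 A) :
    c • x = 0 := by
  induction x using H1_induction_on with | h f => ?_
  rw [← map_smul, (show c • f = 0 from cocycles₁_ext fun g => hc (f g)), map_zero]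

/-- For central `g`, the cocycle identity `f (g h) = f (h g)` exhibits `(ρ g - 1) ∘ f` as the
coboundary of `f g`. -/
theorem sub_one_smul_H1_eq_zero_of_ρ_eq_smul {g : G} (hg : ∀ h, g * h = h * g) {c : k}
    (hρ : ∀ a : A, A.ρ g a = c • a) (x : H1 A) : (c - 1) • x = 0 := by
  induction x using H1_induction_on with | h f => ?_
  rw [← map_smul, H1π_eq_zero_iff]
  refine ⟨f g, funext fun h => ?_⟩
  have hf := (mem_cocycles₁_iff f).1 f.2
  have hcocycle := hf g h
  rw [hg h, hf h g, hρ] at hcocycle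
  show A.ρ h (f g) - f g = (c - 1) • f h
  rw [sub_smul, one_smul, sub_eq_sub_iff_add_eq_add]
  exact hcocycle

end Rep

section MulDistribMulAction

variable {G M : Type} [Group G] [CommGroup M] [MulDistribMulAction G M]

theorem zsmul_H1_ofMulDistribMulAction_eq_zero {c : ℤ} (hc : ∀ m : M, m ^ c = 1)
    (x : H1 (Rep.ofMulDistribMulAction G M)) : c • x = 0 :=
  (int_smul_eq_zsmul _ _ _).symm.trans <|
    smul_H1_eq_zero_of_forall_smul_eq_zero
      (fun a : Additive M => congrArg Additive.ofMul (hc a.toMul)) x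

theorem sub_one_zsmul_H1_ofMulDistribMulAction_eq_zero {g : G} (hg : ∀ h, g * h = h * g)
    {c : ℤ} (hc : ∀ m : M, g • m = m ^ c) (x : H1 (Rep.ofMulDistribMulAction G M)) :
    (c - 1) • x = 0 :=
  (int_smul_eq_zsmul _ _ _).symm.trans <|
    sub_one_smul_H1_eq_zero_of_ρ_eq_smul hg
      (fun a : Additive M => congrArg Additive.ofMul (hc a.toMul)) x

end MulDistribMulAction

end groupCohomology

theorem IsPrimitiveRoot.dvd_numRootsOfUnity {F : Type*} [Field F] {y : F} {e : ℕ} [NeZero e]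
    (hy : IsPrimitiveRoot y e) : e ∣ numRootsOfUnity F := by
  set u := (hy.isUnit (NeZero.ne e)).unit
  have hu : IsPrimitiveRoot u e := IsPrimitiveRoot.coe_units_iff.1 hy
  have ht : u ∈ CommGroup.torsion Fˣ :=
    (CommGroup.mem_torsion _).2 (hu.isOfFinOrder (NeZero.ne e))
  have := orderOf_dvd_natCard (⟨u, ht⟩ : CommGroup.torsion Fˣ)
  rwa [Subgroup.orderOf_mk, ← hu.eq_orderOf] at this

section Galois

variable {K L : Type*} [Field K] [Field L] [Algebra K L]

theorem IsPrimitiveRoot.dvd_numRootsOfUnity_of_forall_algEquiv_apply_eq [IsGalois K L]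
    [FiniteDimensional K L] {η : L} {e : ℕ} [NeZero e] (hη : IsPrimitiveRoot η e)
    (hfix : ∀ σ : L ≃ₐ[K] L, σ η = η) : e ∣ numRootsOfUnity K := by
  obtain ⟨y, rfl⟩ := (IsGalois.mem_range_algebraMap_iff_fixed η).2 hfix
  exact (hη.of_map_of_injective (algebraMap K L).injective).dvd_numRootsOfUnity

theorem exists_smul_eq_zpow_rootsOfUnity (n : ℕ) [NeZero n] (σ : L ≃ₐ[K] L) :
    ∃ c : ℤ, ∀ t : rootsOfUnity n L, σ • t = t ^ c :=
  MonoidHom.map_cyclic ((σ : L ≃* L).restrictRootsOfUnity n).toMonoidHom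

theorem IsPrimitiveRoot.algEquiv_apply_eq_self_of_dvd_sub_one {η : L} {e n : ℕ} [NeZero n]
    (hη : IsPrimitiveRoot η e) (hηn : η ^ n = 1) {σ : L ≃ₐ[K] L} {c : ℤ}
    (hσ : ∀ t : rootsOfUnity n L, σ • t = t ^ c) (hdvd : (e : ℤ) ∣ c - 1) : σ η = η := by
  set t := rootsOfUnity.mkOfPowEq η hηn
  have ht : IsPrimitiveRoot t e :=
    IsPrimitiveRoot.coe_submonoidClass_iff.1 (IsPrimitiveRoot.coe_units_iff.1 hη)
  have htc : t ^ c = t := by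
    rw [← sub_add_cancel c 1, zpow_add, (ht.zpow_eq_one_iff_dvd _).2 hdvd, one_mul, zpow_one]
  exact congrArg (fun s : rootsOfUnity n L => ((s : Lˣ) : L)) ((hσ t).trans htc)

end Galois

theorem isCyclotomicExtension_adjoin_setOf_pow_eq_one (K Ω : Type*) [Field K] [Field Ω]
    [Algebra K Ω] [IsSepClosed Ω] (n : ℕ) [NeZero (n : Ω)] :
    IsCyclotomicExtension {n} K (IntermediateField.adjoin K {z : Ω | z ^ n = 1}) := by
  have : NeZero n := .of_neZero_natCast Ω
  have hroots : {z : Ω | z ^ n = 1} = {z : Ω | ∃ m ∈ ({n} : Set ℕ), m ≠ 0 ∧ z ^ m = 1} := by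
    simp [NeZero.ne n]
  rw [hroots]
  exact IntermediateField.isCyclotomicExtension_adjoin_of_exists_isPrimitiveRoot {n} K Ω
    fun m hm _ => (Set.mem_singleton_iff.1 hm) ▸ HasEnoughRootsOfUnity.exists_primitiveRoot Ω n

open groupCohomology in
theorem numRootsOfUnity_smul_H1_rootsOfUnity_eq_zero {K L : Type} [Field K] [Field L]
    [Algebra K L] (n : ℕ) [NeZero n] [IsCyclotomicExtension {n} K L]
    (x : H1 (Rep.ofMulDistribMulAction (L ≃ₐ[K] L) (rootsOfUnity n L))) :
    (numRootsOfUnity K : ℤ) • x = 0 := by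
  have := IsCyclotomicExtension.isGalois {n} K L
  have := IsCyclotomicExtension.finiteDimensional {n} K L
  have hcomm := (IsCyclotomicExtension.isMulCommutative {n} K L).is_comm.comm
  obtain ⟨ζ, hζ⟩ :=
    IsCyclotomicExtension.exists_isPrimitiveRoot K L (Set.mem_singleton n) (NeZero.ne n)
  have hnx : (n : ℤ) • x = 0 := zsmul_H1_ofMulDistribMulAction_eq_zero
    (fun t => by rw [zpow_natCast]; exact Subtype.ext ((mem_rootsOfUnity n _).1 t.2)) x
  obtain ⟨d, hd⟩ : addOrderOf x ∣ n := by exact_mod_cast addOrderOf_dvd_iff_zsmul_eq_zero.2 hnx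
  have : NeZero (addOrderOf x) := ⟨fun h => NeZero.ne n (by simp [hd, h])⟩
  have hη : IsPrimitiveRoot (ζ ^ d) (addOrderOf x) :=
    hζ.pow (NeZero.pos n) (hd.trans (mul_comm _ _))
  rw [← addOrderOf_dvd_iff_zsmul_eq_zero, Int.natCast_dvd_natCast]
  refine hη.dvd_numRootsOfUnity_of_forall_algEquiv_apply_eq fun σ => ?_
  obtain ⟨c, hc⟩ := exists_smul_eq_zpow_rootsOfUnity n σ
  have hdvd : (addOrderOf x : ℤ) ∣ c - 1 := addOrderOf_dvd_iff_zsmul_eq_zero.2 <|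
    sub_one_zsmul_H1_ofMulDistribMulAction_eq_zero (hcomm σ) hc x
  exact hη.algEquiv_apply_eq_self_of_dvd_sub_one
    (by rw [← pow_mul, mul_comm, pow_mul, hζ.pow_eq_one, one_pow]) hc hdvd

theorem stmt_8_general (K Ω : Type) [Field K] [CharZero K] [Field Ω] [Algebra K Ω]
    [IsAlgClosed Ω] (n : ℕ) (hn : 0 < n)
    (L : IntermediateField K Ω) (hL : L = IntermediateField.adjoin K {z : Ω | z ^ n = 1}) :
    ∀ x : groupCohomology.H1
        (Rep.ofMulDistribMulAction (↥L ≃ₐ[K] ↥L) (rootsOfUnity n ↥L)),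
      (numRootsOfUnity K : ℤ) • x = 0 := by
  have : NeZero n := ⟨hn.ne'⟩
  have : CharZero Ω := charZero_of_injective_algebraMap (algebraMap K Ω).injective
  subst hL
  have := isCyclotomicExtension_adjoin_setOf_pow_eq_one K Ω n
  exact numRootsOfUnity_smul_H1_rootsOfUnity_eq_zero n

/-- Let `K` be a field of characteristic 0 whose maximal abelian subextension over `ℚ` is
finite, and let `λ` be the number of roots of unity in `K`. For every positive integer `n`,
the group cohomology `H¹(Gal(K(ζₙ)/K), μₙ)` is killed by `λ`. -/
theorem stmt_8 (K Ω : Type) [Field K] [CharZero K] [Field Ω] [Algebra K Ω]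
    [IsAlgClosed Ω] [Algebra.IsAlgebraic K Ω]
    (hfin : FiniteDimensional ℚ ↥(maxAb K)) (n : ℕ) (hn : 0 < n)
    (L : IntermediateField K Ω) (hL : L = IntermediateField.adjoin K {z : Ω | z ^ n = 1}) :
    ∀ x : groupCohomology.H1
        (Rep.ofMulDistribMulAction (↥L ≃ₐ[K] ↥L) (rootsOfUnity n ↥L)),
      (numRootsOfUnity K : ℤ) • x = 0 :=
  stmt_8_general K Ω n hn L hL

end
end

section
/- Let G be a group, M a G-module, and τ an element of the center of G. Then the group H¹(G, M) is killed by the endomorphism m ↦ τ·m − m of M; in particular, if τ acts on M as multiplication by an integer c, then H¹(G, M) is killed by c − 1. (Sah's Lemma.) -/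
/-- **Sah's Lemma.** Let `G` be a group, `M` a `G`-module, and `τ` an element of the center of
`G`. Then `H¹(G, M)` is killed by the endomorphism `m ↦ τ·m − m` of `M`: every 1-cocycle `f`,
composed with `m ↦ τ·m − m`, becomes a 1-coboundary. In particular, if `τ` acts on `M` as
multiplication by an integer `c`, then `H¹(G, M)` is killed by `c − 1`. -/
theorem stmt_9 (G M : Type*) [Group G] [AddCommGroup M] [DistribMulAction G M]
    (τ : G) (hτ : τ ∈ Subgroup.center G)
    (f : G → M) (hf : ∀ g h : G, f (g * h) = g • f h + f g) :
    (∃ m : M, ∀ g : G, τ • f g - f g = g • m - m) ∧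
    (∀ c : ℤ, (∀ m : M, τ • m = c • m) → ∃ m : M, ∀ g : G, (c - 1) • f g = g • m - m) := by
  have key : ∀ g : G, τ • f g - f g = g • f τ - f τ := by
    intro g
    have h1 : f (τ * g) = τ • f g + f τ := hf τ g
    have h2 : f (g * τ) = g • f τ + f g := hf g τ
    have h3 : τ * g = g * τ := (Subgroup.mem_center_iff.mp hτ g).symm
    rw [h3, h2] at h1
    rw [eq_comm, sub_eq_sub_iff_add_eq_add]
    exact h1
  refine ⟨⟨f τ, key⟩, fun c hc => ⟨f τ, fun g => ?_⟩⟩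
  have := key g
  rw [hc (f g)] at this
  rw [sub_smul, one_smul, this]
end

section
/- Let K be a field of characteristic 0 with finite maximal abelian subextension, let λ be the number of roots of unity in K, and let n be a positive integer. If x ∈ Kˣ is a (λn)th power in K(ζ_{λn}), then there exist y ∈ Kˣ and a λth root of unity ε ∈ K such that x = ε·yⁿ. -/
noncomputable section

/-- The set of positive integers `Λ` satisfying the Chevalley–Bass property for the field `F`:
for every `n > 0`, `(F(ζ_{Λn})ˣ)^{Λn} ∩ Fˣ ⊆ (Fˣ)ⁿ`, where `F(ζ_{Λn})` is the field obtained
by adjoining all `Λn`-th roots of unity inside the algebraically closed extension `Ω`. -/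
def cbSet (F Ω : Type*) [Field F] [Field Ω] [Algebra F Ω] : Set ℕ :=
  {Λ | 0 < Λ ∧ ∀ n : ℕ, 0 < n → ∀ x : F, x ≠ 0 →
    (∃ y ∈ IntermediateField.adjoin F {z : Ω | z ^ (Λ * n) = 1},
        y ^ (Λ * n) = algebraMap F Ω x) →
    ∃ z : F, z ^ n = x}

/-- The Chevalley–Bass number of a field `F` (computed inside an algebraic closure `Ω`):
the smallest positive integer in `cbSet F Ω`. -/
def chevalleyBass (F Ω : Type*) [Field F] [Field Ω] [Algebra F Ω] : ℕ :=
  sInf (cbSet F Ω)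

/-- The conductor of the maximal abelian subextension of `K/ℚ`: the smallest positive `f`
such that `K_ab ⊆ ℚ(ζ_f)` inside the algebraic closure `Ω`. -/
def conductorAb (K Ω : Type*) [Field K] [CharZero K] [Field Ω] [Algebra K Ω]
    [Algebra ℚ Ω] [IsScalarTower ℚ K Ω] : ℕ :=
  sInf {f | 0 < f ∧ (maxAb K).map (IsScalarTower.toAlgHom ℚ K Ω)
    ≤ IntermediateField.adjoin ℚ {z : Ω | z ^ f = 1}}

end

/-!
Put `m = λn`, `M = K(μ_m)` and `x = Yᵐ`. The Kummer cocycle `u(σ) = σY/Y` takes values in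
`μ_m`, and the integers `r` for which `uʳ` is a coboundary form an ideal `I ⊆ ℤ` containing `m`.
Since `Gal(M/K)` is abelian, if `τ` acts on `μ_m` by `ζ ↦ ζᵏ` then `u^(k-1)` is the coboundary of
`u(τ)`, so `k - 1 ∈ I`. If `g` generates `I`, then `ζ^(m/g)` is a Galois-invariant primitive
`g`-th root of unity, hence lies in `K`, so `g ∣ λ` and `λ ∈ I`: `u^λ = σc/c` with `cᵐ = 1`.
Then `W = Y^λ/c` is Galois-invariant, so `W ∈ K`, and `x = (Wc)ⁿ = cⁿ·Wⁿ` with `(cⁿ)^λ = 1`.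
-/

open IntermediateField

theorem IsPrimitiveRoot.map_eq_pow_of_map_eq_pow {R F : Type*} [CommRing R] [IsDomain R]
    [FunLike F R R] [MonoidHomClass F R R] {m k : ℕ} [NeZero m] {ζ : R} (hζ : IsPrimitiveRoot ζ m)
    {f : F} (hf : f ζ = ζ ^ k) {u : R} (hu : u ^ m = 1) : f u = u ^ k := by
  obtain ⟨i, -, rfl⟩ := hζ.eq_pow_of_pow_eq_one hu
  rw [map_pow, hf, ← pow_mul, ← pow_mul, mul_comm]

theorem IsPrimitiveRoot.dvd_numRootsOfUnity_s11 {K : Type*} [Field K] {w : K} {g : ℕ} (hg : g ≠ 0)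
    (hw : IsPrimitiveRoot w g) : g ∣ numRootsOfUnity K := by
  obtain ⟨u, rfl⟩ := hw.isUnit hg
  rw [IsPrimitiveRoot.coe_units_iff] at hw
  have hu : u ∈ CommGroup.torsion Kˣ :=
    isOfFinOrder_iff_pow_eq_one.mpr ⟨g, Nat.pos_of_ne_zero hg, hw.pow_eq_one⟩
  exact hw.eq_orderOf ▸ Subgroup.orderOf_dvd_natCard _ hu

section Kummer

variable (K : Type*) {M : Type*} [Field K] [Field M] [Algebra K M]

/-- `r` lies in this ideal iff `r` kills the class of the Kummer cocycle `σ ↦ σ Y / Y` in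
`H¹(Gal(M/K), μ_m)`. -/
def coboundaryExponents (m : ℕ) {Y : M} (hY : Y ≠ 0) : Ideal ℤ where
  carrier := {r | ∃ c : M, c ^ m = 1 ∧ ∀ σ : Gal(M/K), (σ Y / Y) ^ r = σ c / c}
  zero_mem' := ⟨1, one_pow m, fun σ => by rw [zpow_zero, map_one, div_one]⟩
  add_mem' := by
    rintro r s ⟨c, hcm, hc⟩ ⟨d, hdm, hd⟩
    refine ⟨c * d, by rw [mul_pow, hcm, hdm, one_mul], fun σ => ?_⟩
    have hu : σ Y / Y ≠ 0 := div_ne_zero ((map_ne_zero σ).mpr hY) hY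
    rw [zpow_add₀ hu, hc σ, hd σ, map_mul, div_mul_div_comm]
  smul_mem' := by
    rintro s r ⟨c, hcm, hc⟩
    refine ⟨c ^ s, ?_, fun σ => ?_⟩
    · rw [← zpow_natCast, ← zpow_mul, mul_comm, zpow_mul, zpow_natCast, hcm, one_zpow]
    · rw [smul_eq_mul, mul_comm, zpow_mul, hc σ, div_zpow, map_zpow₀]

variable {K}

theorem map_div_self_pow_eq_one {m : ℕ} {Y : M} (hY : Y ≠ 0) {x : K}
    (hYx : Y ^ m = algebraMap K M x) (σ : Gal(M/K)) : (σ Y / Y) ^ m = 1 := by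
  rw [div_pow, ← map_pow, hYx, AlgEquiv.commutes, ← hYx, div_self (pow_ne_zero m hY)]

theorem natCast_mem_coboundaryExponents {m : ℕ} {Y : M} (hY : Y ≠ 0) {x : K}
    (hYx : Y ^ m = algebraMap K M x) : (m : ℤ) ∈ coboundaryExponents K m hY :=
  ⟨1, one_pow m, fun σ => by rw [zpow_natCast, map_div_self_pow_eq_one hY hYx, map_one, div_one]⟩

open scoped IsMulCommutative in
theorem sub_one_mem_coboundaryExponents [IsMulCommutative Gal(M/K)] {m k : ℕ} [NeZero m]
    {ζ : M} (hζ : IsPrimitiveRoot ζ m) {Y : M} (hY : Y ≠ 0) {x : K}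
    (hYx : Y ^ m = algebraMap K M x) {τ : Gal(M/K)} (hτ : τ ζ = ζ ^ k) :
    (k : ℤ) - 1 ∈ coboundaryExponents K m hY := by
  refine ⟨τ Y / Y, map_div_self_pow_eq_one hY hYx τ, fun σ => ?_⟩
  have hσY : σ Y ≠ 0 := (map_ne_zero σ).mpr hY
  have hτY : τ Y ≠ 0 := (map_ne_zero τ).mpr hY
  have hστ : σ (τ Y) = τ (σ Y) := by rw [← AlgEquiv.mul_apply, mul_comm, AlgEquiv.mul_apply]
  rw [zpow_sub₀ (div_ne_zero hσY hY), zpow_natCast, zpow_one,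
    ← hζ.map_eq_pow_of_map_eq_pow hτ (map_div_self_pow_eq_one hY hYx σ),
    div_eq_div_iff (div_ne_zero hσY hY) (div_ne_zero hτY hY), map_div₀, map_div₀,
    div_mul_div_cancel₀ hτY, div_mul_div_cancel₀ hσY, hστ]

theorem natCast_numRootsOfUnity_mem [FiniteDimensional K M] [IsGalois K M] {m : ℕ} [NeZero m]
    {ζ : M} (hζ : IsPrimitiveRoot ζ m) (I : Ideal ℤ) (hmI : (m : ℤ) ∈ I)
    (hI : ∀ σ : Gal(M/K), ∃ k : ℕ, σ ζ = ζ ^ k ∧ (k : ℤ) - 1 ∈ I) :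
    (numRootsOfUnity K : ℤ) ∈ I := by
  obtain ⟨g, rfl⟩ := (IsPrincipalIdealRing.principal I).principal
  rw [Ideal.submodule_span_eq] at hmI hI ⊢
  simp only [Ideal.mem_span_singleton] at hmI hI ⊢
  have hgm : g.natAbs ∣ m := Int.natAbs_dvd_natAbs.mpr hmI
  have hg : g.natAbs ≠ 0 := ne_zero_of_dvd_ne_zero (NeZero.ne m) hgm
  have hz : IsPrimitiveRoot (ζ ^ (m / g.natAbs)) g.natAbs :=
    hζ.pow (NeZero.pos m) (Nat.div_mul_cancel hgm).symm
  have hfixed : ∀ σ : Gal(M/K), σ (ζ ^ (m / g.natAbs)) = ζ ^ (m / g.natAbs) := by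
    intro σ
    obtain ⟨k, hσ, hk⟩ := hI σ
    have hzk : (ζ ^ (m / g.natAbs)) ^ ((k : ℤ) - 1) = 1 :=
      (hz.zpow_eq_one_iff_dvd _).mpr (Int.natAbs_dvd.mpr hk)
    rw [map_pow, hσ, pow_right_comm, ← zpow_natCast, ← sub_add_cancel (k : ℤ) 1,
      zpow_add₀ (hz.ne_zero hg), hzk, one_mul, zpow_one]
  obtain ⟨w, hw⟩ := (IsGalois.mem_range_algebraMap_iff_fixed _).mpr hfixed
  have := (IsPrimitiveRoot.of_map_of_injective (f := algebraMap K M) (hw ▸ hz)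
    (algebraMap K M).injective).dvd_numRootsOfUnity_s11 hg
  exact Int.natAbs_dvd.mp (Int.natCast_dvd_natCast.mpr this)

theorem exists_eq_mul_pow_of_pow_eq_algebraMap [FiniteDimensional K M] [IsAbelianGalois K M]
    {n : ℕ} [NeZero (numRootsOfUnity K * n)] {ζ : M}
    (hζ : IsPrimitiveRoot ζ (numRootsOfUnity K * n)) {x : K} (hx : x ≠ 0) {Y : M}
    (hYx : Y ^ (numRootsOfUnity K * n) = algebraMap K M x) :
    ∃ y ε : K, ε ^ numRootsOfUnity K = 1 ∧ x = ε * y ^ n := by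
  set l := numRootsOfUnity K
  have hY : Y ≠ 0 := by
    rintro rfl
    rw [zero_pow (NeZero.ne _), eq_comm, map_eq_zero] at hYx
    exact hx hYx
  obtain ⟨c, hcm, hc⟩ : (l : ℤ) ∈ coboundaryExponents K (l * n) hY :=
    natCast_numRootsOfUnity_mem hζ _ (natCast_mem_coboundaryExponents hY hYx) fun σ => by
      obtain ⟨k, -, hk⟩ := hζ.eq_pow_of_pow_eq_one
        (show σ ζ ^ (l * n) = 1 by rw [← map_pow, hζ.pow_eq_one, map_one])
      exact ⟨k, hk.symm, sub_one_mem_coboundaryExponents hζ hY hYx hk.symm⟩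
  have hc0 : c ≠ 0 := by
    rintro rfl
    exact zero_ne_one ((zero_pow (NeZero.ne _)).symm.trans hcm)
  obtain ⟨w, hw⟩ := (IsGalois.mem_range_algebraMap_iff_fixed (Y ^ l / c)).mpr fun σ => by
    have hσ := hc σ
    rw [zpow_natCast, div_pow, ← map_pow, div_eq_div_iff (pow_ne_zero l hY) hc0] at hσ
    rw [map_div₀, div_eq_div_iff ((map_ne_zero σ).mpr hc0) hc0, hσ, mul_comm]
  have hε : algebraMap K M (x / w ^ n) = c ^ n := by
    rw [map_div₀, map_pow, hw, ← hYx, div_pow, ← pow_mul, div_div_cancel₀ (pow_ne_zero _ hY)]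
  have hw0 : w ≠ 0 := by
    rintro rfl
    rw [map_zero, eq_comm, div_eq_zero_iff] at hw
    exact hw.elim (pow_ne_zero l hY) hc0
  refine ⟨w, x / w ^ n, (algebraMap K M).injective ?_,
    (div_mul_cancel₀ x (pow_ne_zero n hw0)).symm⟩
  rw [map_pow, hε, map_one, ← pow_mul, mul_comm, hcm]

end Kummer

theorem isCyclotomicExtension_adjoin_pow_eq_one (K : Type*) {L : Type*} [Field K] [Field L]
    [Algebra K L] {m : ℕ} [NeZero m] {ζ : L} (hζ : IsPrimitiveRoot ζ m) :
    IsCyclotomicExtension {m} K (adjoin K {z : L | z ^ m = 1}) := by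
  have hroots : {z : L | z ^ m = 1} = {z | ∃ k ∈ ({m} : Set ℕ), k ≠ 0 ∧ z ^ k = 1} := by
    simp [NeZero.ne m]
  rw [hroots]
  exact isCyclotomicExtension_adjoin_of_exists_isPrimitiveRoot {m} K L
    (by simpa using fun _ => ⟨ζ, hζ⟩)

theorem stmt_11_general (K Ω : Type*) [Field K] [CharZero K] [Field Ω] [Algebra K Ω]
    [IsAlgClosed Ω] (n : ℕ)
    (x : K) (hx : x ≠ 0)
    (h : ∃ y ∈ IntermediateField.adjoin K {z : Ω | z ^ (numRootsOfUnity K * n) = 1},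
        y ^ (numRootsOfUnity K * n) = algebraMap K Ω x) :
    ∃ (y ε : K), ε ^ numRootsOfUnity K = 1 ∧ x = ε * y ^ n := by
  obtain ⟨Y, hYL, hYx⟩ := h
  set m := numRootsOfUnity K * n
  rcases eq_zero_or_neZero m with hm | hm
  · rw [hm, pow_zero, eq_comm, map_eq_one_iff _ (algebraMap K Ω).injective] at hYx
    exact ⟨1, 1, one_pow _, by rw [hYx, one_pow, one_mul]⟩
  have : NeZero (m : Ω) := NeZero.nat_of_injective (algebraMap K Ω).injective
  obtain ⟨ζ, hζ⟩ := HasEnoughRootsOfUnity.exists_primitiveRoot Ω m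
  have := isCyclotomicExtension_adjoin_pow_eq_one K hζ
  have := IsCyclotomicExtension.finiteDimensional {m} K (adjoin K {z : Ω | z ^ m = 1})
  have := IsCyclotomicExtension.isAbelianGalois {m} K (adjoin K {z : Ω | z ^ m = 1})
  exact exists_eq_mul_pow_of_pow_eq_algebraMap (ζ := ⟨ζ, subset_adjoin K _ hζ.pow_eq_one⟩)
    (IsPrimitiveRoot.coe_submonoidClass_iff.mp hζ) hx (Y := ⟨Y, hYL⟩) (Subtype.ext hYx)

/-- Let `K` be a field of characteristic 0 with finite maximal abelian subextension, let `λ`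
be the number of roots of unity in `K`, and let `n` be a positive integer. If `x ∈ Kˣ` is a
`(λn)`-th power in `K(ζ_{λn})`, then there exist `y ∈ Kˣ` and a `λ`-th root of unity
`ε ∈ K` such that `x = ε·yⁿ`. -/
theorem stmt_11 (K Ω : Type*) [Field K] [CharZero K] [Field Ω] [Algebra K Ω]
    [IsAlgClosed Ω] [Algebra.IsAlgebraic K Ω]
    (hfin : FiniteDimensional ℚ ↥(maxAb K)) (n : ℕ) (hn : 0 < n)
    (x : K) (hx : x ≠ 0)
    (h : ∃ y ∈ IntermediateField.adjoin K {z : Ω | z ^ (numRootsOfUnity K * n) = 1},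
        y ^ (numRootsOfUnity K * n) = algebraMap K Ω x) :
    ∃ (y ε : K), ε ^ numRootsOfUnity K = 1 ∧ x = ε * y ^ n :=
  stmt_11_general K Ω n x hx h
end

section
/- Let p be an odd prime, and fix integers t ≥ 2. Let G ≤ (ℤ/p^tℤ)ˣ × (ℤ/mℤ)ˣ be the cyclic subgroup generated by (1+p^k, γ), where 1 ≤ k < t, γ has order a power of p dividing p^{t−k}, and G acts on ℤ/p^tℤ via its first coordinate (multiplication). Then projection to the first coordinate gives an isomorphism G ≅ Ω_p^{k,t} = ker((ℤ/p^tℤ)ˣ → (ℤ/p^kℤ)ˣ), and hence H¹(G, ℤ/p^tℤ) = 0. -/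
/-!
Write `t = j + k`. The unit `u = 1 + p ^ k` of `ZMod (p ^ (j + k))` has order `p ^ j`, which is
also the order of the kernel of reduction modulo `p ^ k`; so `u` generates that kernel, and since
the order of `γ` divides the order of `u`, `G` projects isomorphically onto it.

A 1-cocycle `f` on the cyclic group generated by `g = (u, γ)` is determined by `y = f g`, which
satisfies `N * y = 0` for the norm `N = ∑ i < p ^ j, u ^ i`, and `f` is a coboundary as soon as
`y ∈ (u - 1) M = p ^ k M`. Over `ℤ`, `N * p ^ k = (1 + p ^ k) ^ p ^ j - 1 = p ^ (j + k) * (1 + p c)`,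
so in `ZMod (p ^ (j + k))` the norm is `p ^ j` times a unit, and `N * y = 0` forces `p ^ k ∣ y`.
-/

open Finset

section CyclicCocycle

variable {G R : Type*} [Group G] [CommRing R] (ρ : G →* R) {f : G → R}

theorem cocycle_apply_one (hf : ∀ a b, f (a * b) = ρ a * f b + f a) : f 1 = 0 := by
  simpa using hf 1 1

theorem cocycle_apply_pow (hf : ∀ a b, f (a * b) = ρ a * f b + f a) (g : G) (n : ℕ) :
    f (g ^ n) = (∑ i ∈ range n, ρ g ^ i) * f g := by
  induction n with
  | zero => simpa using cocycle_apply_one ρ hf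
  | succ n ih => rw [pow_succ, hf, ih, map_pow, sum_range_succ]; ring

theorem cocycle_apply_pow_eq_coboundary (hf : ∀ a b, f (a * b) = ρ a * f b + f a) {g : G}
    {x : R} (hx : f g = (ρ g - 1) * x) (n : ℕ) : f (g ^ n) = (ρ (g ^ n) - 1) * x := by
  rw [cocycle_apply_pow ρ hf, hx, ← mul_assoc, geom_sum_mul, map_pow]

theorem exists_cocycle_eq_coboundary_zpowers {g : G} {N : ℕ} (hN0 : 0 < N) (hN : g ^ N = 1)
    (hnorm : ∀ y : R, (∑ i ∈ range N, ρ g ^ i) * y = 0 → ∃ x, y = (ρ g - 1) * x)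
    (f : Subgroup.zpowers g → R) (hf : ∀ a b, f (a * b) = ρ a * f b + f a) :
    ∃ x, ∀ a, f a = ρ a * x - x := by
  let ρ' := ρ.comp (Subgroup.zpowers g).subtype
  let g' : Subgroup.zpowers g := ⟨g, Subgroup.mem_zpowers g⟩
  have hg' : g' ^ N = 1 := Subtype.ext hN
  have hfN := cocycle_apply_pow ρ' hf g' N
  rw [hg', cocycle_apply_one ρ' hf] at hfN
  obtain ⟨x, hx⟩ := hnorm (f g') hfN.symm
  refine ⟨x, fun a => ?_⟩
  obtain ⟨n, hn⟩ := (isOfFinOrder_iff_pow_eq_one.2 ⟨N, hN0, hN⟩).mem_powers_iff_mem_zpowers.2 a.2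
  rw [show a = g' ^ n from Subtype.ext hn.symm, cocycle_apply_pow_eq_coboundary ρ' hf hx,
    sub_one_mul]
  rfl

end CyclicCocycle

theorem injective_fst_zpowers {α β : Type*} [Group α] [Group β] {a : α} {b : β}
    (h : orderOf b ∣ orderOf a) :
    Function.Injective fun g : Subgroup.zpowers (a, b) => MonoidHom.fst α β g := by
  refine (injective_iff_map_eq_one
    ((MonoidHom.fst α β).comp (Subgroup.zpowers (a, b)).subtype)).2 ?_
  rintro ⟨_, n, rfl⟩ hn
  have ha : a ^ n = 1 := hn
  have hb : b ^ n = 1 := orderOf_dvd_iff_zpow_eq_one.1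
    ((Int.natCast_dvd_natCast.2 h).trans (orderOf_dvd_iff_zpow_eq_one.2 ha))
  exact Subtype.ext (Prod.ext ha hb)

theorem geom_sum_one_add_prime_pow {p k : ℕ} (hp : p.Prime) (hpk : k + 2 ≤ p * k) (j : ℕ) :
    ∃ c : ℤ, ∑ i ∈ range (p ^ j), (1 + (p : ℤ) ^ k) ^ i = p ^ j * (1 + p * c) := by
  obtain ⟨c, hc⟩ := ZMod.exists_one_add_mul_pow_prime_pow_eq (R := ℤ) (u := (p : ℤ) ^ k) (v := p)
    hp (dvd_pow_self _ (by rintro rfl; simp at hpk))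
    (by rw [← pow_succ', ← pow_succ, ← pow_mul, mul_comm]; exact pow_dvd_pow _ hpk) 1 j
  rw [mul_one] at hc
  refine ⟨c, mul_right_cancel₀ (pow_ne_zero k (Int.natCast_ne_zero.2 hp.ne_zero)) ?_⟩
  calc (∑ i ∈ range (p ^ j), (1 + (p : ℤ) ^ k) ^ i) * p ^ k
      = (1 + (p : ℤ) ^ k) ^ p ^ j - 1 := by rw [← geom_sum_mul, add_sub_cancel_left]
    _ = p ^ j * (1 + p * c) * p ^ k := by rw [hc]; ring

namespace ZMod

theorem exists_eq_mul_of_natCast_mul_eq_zero {a b n : ℕ} (ha : a ≠ 0) (hn : a * b = n)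
    {y : ZMod n} (hy : (a : ZMod n) * y = 0) : ∃ z, y = b * z := by
  subst hn
  obtain ⟨y, rfl⟩ := intCast_surjective y
  rw [← Int.cast_natCast, ← Int.cast_mul, intCast_zmod_eq_zero_iff_dvd, Nat.cast_mul] at hy
  obtain ⟨z, rfl⟩ := (Int.mul_dvd_mul_iff_left (by exact_mod_cast ha)).1 hy
  exact ⟨z, by push_cast; rfl⟩

theorem exists_eq_prime_pow_mul_of_geom_sum_mul_eq_zero_s19 {p k : ℕ} (hp : p.Prime)
    (hpk : k + 2 ≤ p * k) (j : ℕ) {y : ZMod (p ^ (j + k))}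
    (hy : (∑ i ∈ range (p ^ j), (1 + (p : ZMod (p ^ (j + k))) ^ k) ^ i) * y = 0) :
    ∃ x, y = p ^ k * x := by
  obtain ⟨c, hc⟩ := geom_sum_one_add_prime_pow hp hpk j
  have hp_nil : IsNilpotent (p : ZMod (p ^ (j + k))) := ⟨j + k, by exact_mod_cast natCast_self _⟩
  replace hy : (p : ZMod (p ^ (j + k))) ^ j * (1 + p * c) * y = 0 := by
    have hc' := congrArg (Int.cast : ℤ → ZMod (p ^ (j + k))) hc
    push_cast at hc'
    rwa [← hc']
  rw [mul_right_comm,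
    ((Commute.all _ _).isNilpotent_mul_right hp_nil).isUnit_one_add.mul_left_eq_zero] at hy
  exact_mod_cast exists_eq_mul_of_natCast_mul_eq_zero (pow_ne_zero j hp.ne_zero)
    (pow_add p j k).symm (by exact_mod_cast hy)

theorem orderOf_one_add_prime_pow {p k : ℕ} (hp : p.Prime) (hpk : k + 2 ≤ p * k) (j : ℕ) :
    orderOf (1 + (p : ZMod (p ^ (j + k))) ^ k) = p ^ j := by
  simpa using orderOf_one_add_mul_prime_pow hp k (by rintro rfl; simp at hpk) hpk 1
    (by exact_mod_cast hp.not_dvd_one) j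

theorem card_ker_unitsMap_mul_totient_s19 {m n : ℕ} [NeZero n] (h : m ∣ n) :
    Nat.card (unitsMap h).ker * m.totient = n.totient := by
  have : NeZero m := ⟨fun hm => NeZero.ne n (Nat.eq_zero_of_zero_dvd (hm ▸ h))⟩
  have hq := Subgroup.card_eq_card_quotient_mul_card_subgroup (unitsMap h).ker
  rw [Nat.card_congr (QuotientGroup.quotientKerEquivOfSurjective _
    (unitsMap_surjective h)).toEquiv] at hq
  simp only [Nat.card_eq_fintype_card, card_units_eq_totient] at hq ⊢
  rw [hq, mul_comm]

theorem card_ker_unitsMap_prime_pow_s19 {p k : ℕ} (hp : p.Prime) (hk : k ≠ 0) (j : ℕ) :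
    Nat.card (unitsMap (pow_dvd_pow p (Nat.le_add_left k j))).ker = p ^ j := by
  have : NeZero (p ^ (j + k)) := ⟨pow_ne_zero _ hp.ne_zero⟩
  have h := card_ker_unitsMap_mul_totient_s19 (pow_dvd_pow p (Nat.le_add_left k j))
  obtain ⟨k, rfl⟩ := Nat.exists_eq_add_one_of_ne_zero hk
  have hφ : (p ^ (j + (k + 1))).totient = p ^ j * (p ^ (k + 1)).totient := by
    rw [← add_assoc, Nat.totient_prime_pow_succ hp, Nat.totient_prime_pow_succ hp, pow_add]; ring
  rw [hφ] at h
  exact Nat.eq_of_mul_eq_mul_right (Nat.totient_pos.2 (pow_pos hp.pos _)) h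

theorem zpowers_eq_ker_unitsMap_prime_pow {p k j : ℕ} (hp : p.Prime) (hpk : k + 2 ≤ p * k)
    {u : (ZMod (p ^ (j + k)))ˣ} (hu : (u : ZMod (p ^ (j + k))) = 1 + p ^ k) :
    Subgroup.zpowers u = (unitsMap (pow_dvd_pow p (Nat.le_add_left k j))).ker := by
  refine Subgroup.eq_of_le_of_card_ge (Subgroup.zpowers_le.2 ?_) ?_
  · rw [MonoidHom.mem_ker, ← Units.val_inj, Units.val_one]
    change castHom (pow_dvd_pow p (Nat.le_add_left k j)) (ZMod (p ^ k)) u = 1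
    rw [hu, map_add, map_one, map_pow, map_natCast, ← Nat.cast_pow, natCast_self, add_zero]
  · rw [card_ker_unitsMap_prime_pow_s19 hp (by rintro rfl; simp at hpk), Nat.card_zpowers,
      ← orderOf_units, hu, orderOf_one_add_prime_pow hp hpk]

end ZMod

theorem stmt_19_general (p m : ℕ) (hp : p.Prime) (hodd : Odd p)
    (t k : ℕ) (hk : 1 ≤ k) (hkt : k < t)
    (u : (ZMod (p ^ t))ˣ) (hu : (u : ZMod (p ^ t)) = 1 + (p : ZMod (p ^ t)) ^ k)
    (γ : (ZMod m)ˣ) (hγd : orderOf γ ∣ p ^ (t - k))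
    (G : Subgroup ((ZMod (p ^ t))ˣ × (ZMod m)ˣ)) (hG : G = Subgroup.zpowers (u, γ)) :
    (Function.Injective fun g : G =>
      (MonoidHom.fst (ZMod (p ^ t))ˣ (ZMod m)ˣ) (g : (ZMod (p ^ t))ˣ × (ZMod m)ˣ)) ∧
    Subgroup.map (MonoidHom.fst (ZMod (p ^ t))ˣ (ZMod m)ˣ) G
      = (ZMod.unitsMap (pow_dvd_pow p hkt.le)).ker ∧
    (∀ f : G → ZMod (p ^ t),
      (∀ a b : G, f (a * b)
          = ((a : (ZMod (p ^ t))ˣ × (ZMod m)ˣ).1 : ZMod (p ^ t)) * f b + f a) →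
      ∃ x : ZMod (p ^ t), ∀ a : G,
        f a = ((a : (ZMod (p ^ t))ˣ × (ZMod m)ˣ).1 : ZMod (p ^ t)) * x - x) := by
  obtain ⟨j, rfl⟩ : ∃ j, t = j + k := ⟨t - k, by omega⟩
  rw [Nat.add_sub_cancel] at hγd
  subst hG
  have hpk : k + 2 ≤ p * k := by
    have hp3 : 3 ≤ p := lt_of_le_of_ne hp.two_le fun h => by subst h; exact absurd hodd (by decide)
    nlinarith
  have hu_ord : orderOf u = p ^ j := by
    rw [← orderOf_units, hu, ZMod.orderOf_one_add_prime_pow hp hpk]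
  refine ⟨injective_fst_zpowers (hu_ord ▸ hγd), ?_, fun f hf => ?_⟩
  · rw [MonoidHom.map_zpowers]
    exact ZMod.zpowers_eq_ker_unitsMap_prime_pow hp hpk hu
  · refine exists_cocycle_eq_coboundary_zpowers ((Units.coeHom _).comp (MonoidHom.fst _ (ZMod m)ˣ))
      (pow_pos hp.pos j) (Prod.ext (hu_ord ▸ pow_orderOf_eq_one u)
        (orderOf_dvd_iff_pow_eq_one.1 hγd)) (fun y hy => ?_) f hf
    change (∑ i ∈ range (p ^ j), (u : ZMod (p ^ (j + k))) ^ i) * y = 0 at hy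
    change ∃ x, y = ((u : ZMod (p ^ (j + k))) - 1) * x
    rw [hu] at hy ⊢
    rw [add_sub_cancel_left]
    exact ZMod.exists_eq_prime_pow_mul_of_geom_sum_mul_eq_zero_s19 hp hpk j hy

/-- Let `p` be an odd prime, `t ≥ 2`, `1 ≤ k < t`, `m` coprime to `p`, and let
`G ≤ (ℤ/p^tℤ)ˣ × (ℤ/mℤ)ˣ` be the cyclic subgroup generated by `(1+p^k, γ)`, where `γ` has
order a power of `p` dividing `p^(t−k)`. Then projection to the first coordinate gives an
isomorphism `G ≅ Ω_p^{k,t} = ker((ℤ/p^tℤ)ˣ → (ℤ/p^kℤ)ˣ)`, and hence, for the action of `G`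
on `ℤ/p^tℤ` by multiplication by the first coordinate, `H¹(G, ℤ/p^tℤ) = 0` (every 1-cocycle
is a 1-coboundary). -/
theorem stmt_19 (p m : ℕ) (hp : p.Prime) (hodd : Odd p) (hm : Nat.Coprime m p)
    (t k : ℕ) (ht : 2 ≤ t) (hk : 1 ≤ k) (hkt : k < t)
    (u : (ZMod (p ^ t))ˣ) (hu : (u : ZMod (p ^ t)) = 1 + (p : ZMod (p ^ t)) ^ k)
    (γ : (ZMod m)ˣ) (hγ : ∃ s : ℕ, orderOf γ = p ^ s) (hγd : orderOf γ ∣ p ^ (t - k))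
    (G : Subgroup ((ZMod (p ^ t))ˣ × (ZMod m)ˣ)) (hG : G = Subgroup.zpowers (u, γ)) :
    (Function.Injective fun g : G =>
      (MonoidHom.fst (ZMod (p ^ t))ˣ (ZMod m)ˣ) (g : (ZMod (p ^ t))ˣ × (ZMod m)ˣ)) ∧
    Subgroup.map (MonoidHom.fst (ZMod (p ^ t))ˣ (ZMod m)ˣ) G
      = (ZMod.unitsMap (pow_dvd_pow p hkt.le)).ker ∧
    (∀ f : G → ZMod (p ^ t),
      (∀ a b : G, f (a * b)
          = ((a : (ZMod (p ^ t))ˣ × (ZMod m)ˣ).1 : ZMod (p ^ t)) * f b + f a) →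
      ∃ x : ZMod (p ^ t), ∀ a : G,
        f a = ((a : (ZMod (p ^ t))ˣ × (ZMod m)ˣ).1 : ZMod (p ^ t)) * x - x) :=
  stmt_19_general p m hp hodd t k hk hkt u hu γ hγd G hG
end
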